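/- arXiv:2106.12846 — 2 statements merged into one kernel-verified Lean document; each statement's English description precedes it below -/
import Mathlib

section
/- Let α be an alphabet with at least two distinct letters and let f : (Fin n → FreeMonoid α) → FreeMonoid α be congruence preserving. Then there exists a tuple k : Fin n → ℕ (the multidegree of f) such that for all u : Fin n → FreeMonoid α, |f u| = |f (fun _ => 1)| + ∑ i, k i * |u i|, where 1 denotes the empty word. -/
/-!
Congruence preserving functions respect the kernel of every homomorphism out of the free monoid,
in particular of letter counts. So `|f u|` only depends on the lengths `ℓ` of the `u i`, say
`|f u| = Φ ℓ`. Feeding in the words `a ^ ℓ i * b ^ m i` and counting the letters `b` and the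
other letters separately gives `Φ (ℓ + m) + Φ 0 = Φ ℓ + Φ m`, and an `ℕ`-valued solution of this
equation is affine with nonnegative coefficients.
-/

/-- `f` is congruence preserving on the free monoid. -/
def IsCP {α : Type*} {n : ℕ} (f : (Fin n → FreeMonoid α) → FreeMonoid α) : Prop :=
  ∀ c : Con (FreeMonoid α), ∀ u v : Fin n → FreeMonoid α,
    (∀ i, c (u i) (v i)) → c (f u) (f v)

section AffineOfPexider

variable {M : Type*} [AddMonoid M] {Φ : M → ℕ}

theorem apply_nsmul_add_mul_apply_zero (hΦ : ∀ x y, Φ (x + y) + Φ 0 = Φ x + Φ y)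
    (x : M) (m : ℕ) : Φ (m • x) + m * Φ 0 = Φ 0 + m * Φ x := by
  induction m with
  | zero => simp
  | succ m ih =>
    have := hΦ (m • x) x
    rw [succ_nsmul]
    linarith

/-- `m ↦ Φ (m • x)` is affine with slope `Φ x - Φ 0` and takes values in `ℕ`,
so the slope cannot be negative. -/
theorem apply_zero_le_apply (hΦ : ∀ x y, Φ (x + y) + Φ 0 = Φ x + Φ y) (x : M) :
    Φ 0 ≤ Φ x := by
  by_contra! h
  have := apply_nsmul_add_mul_apply_zero hΦ x (Φ 0 + 1)
  nlinarith

theorem exists_eq_apply_zero_add_sum_mul {ι : Type*} [Fintype ι] {Φ : (ι → ℕ) → ℕ}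
    (hΦ : ∀ x y, Φ (x + y) + Φ 0 = Φ x + Φ y) :
    ∃ k : ι → ℕ, ∀ x, Φ x = Φ 0 + ∑ i, k i * x i := by
  classical
  have hle := apply_zero_le_apply hΦ
  let Ψ : (ι → ℕ) →+ ℕ :=
    { toFun x := Φ x - Φ 0
      map_zero' := Nat.sub_self _
      map_add' x y := by have := hΦ x y; have := hle x; have := hle y; omega }
  refine ⟨fun i => Ψ fun j => if i = j then 1 else 0, fun x => ?_⟩
  have hΨ : Ψ x = ∑ i, x i * Ψ fun j => if i = j then 1 else 0 :=
    Ψ.toNatLinearMap.pi_apply_eq_sum_univ x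
  have hΦ : Φ x = Φ 0 + Ψ x := (Nat.add_sub_of_le (hle x)).symm
  simp only [hΦ, hΨ, mul_comm]

end AffineOfPexider

namespace IsCP

open FreeMonoid

variable {α : Type*} {n : ℕ} {f : (Fin n → FreeMonoid α) → FreeMonoid α}
  {u v : Fin n → FreeMonoid α}

theorem map_eq_map (hf : IsCP f) {M : Type*} [MulOneClass M] (φ : FreeMonoid α →* M)
    (h : ∀ i, φ (u i) = φ (v i)) : φ (f u) = φ (f v) :=
  (Con.ker_rel φ).1 <| hf (Con.ker φ) u v fun i => (Con.ker_rel φ).2 (h i)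

theorem countP'_eq_countP' (hf : IsCP f) (p : α → Prop) [DecidablePred p]
    (h : ∀ i, (u i).countP' p = (v i).countP' p) : (f u).countP' p = (f v).countP' p :=
  hf.map_eq_map (countP p) h

theorem length_eq_length (hf : IsCP f) (h : ∀ i, (u i).length = (v i).length) :
    (f u).length = (f v).length := by
  have hlen (w : FreeMonoid α) : w.countP' (fun _ => True) = w.length := by
    simp [countP', length]
  simpa only [hlen] using hf.countP'_eq_countP' (fun _ => True) (by simpa only [hlen] using h)

theorem length_mul_add_length_one (hf : IsCP f) (p : α → Prop) [DecidablePred p]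
    (hu : ∀ i, ∀ x ∈ (u i).toList, ¬p x) (hv : ∀ i, ∀ x ∈ (v i).toList, p x) :
    (f (u * v)).length + (f 1).length = (f u).length + (f v).length := by
  have hlen (w : FreeMonoid α) : w.length = w.countP' p + w.countP' (¬p ·) :=
    (List.length_eq_countP_add_countP (p ·)).trans (by simp [countP'])
  have hu' (i : Fin n) : (u i).countP' p = 0 := List.countP_eq_zero.2 (by simpa using hu i)
  have hv' (i : Fin n) : (v i).countP' (¬p ·) = 0 := List.countP_eq_zero.2 (by simpa using hv i)
  have h₁ := hf.countP'_eq_countP' p (u := u * v) (v := v) fun i => by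
    simp [countP'_mul, hu']
  have h₂ := hf.countP'_eq_countP' (¬p ·) (u := u * v) (v := u) fun i => by
    simp [countP'_mul, hv']
  have h₃ := hf.countP'_eq_countP' p (u := u) (v := 1) fun i => by
    simp [countP'_one, hu']
  have h₄ := hf.countP'_eq_countP' (¬p ·) (u := v) (v := 1) fun i => by
    simp [countP'_one, hv']
  rw [hlen, hlen (f 1), hlen (f u), hlen (f v)]
  omega

end IsCP

open FreeMonoid in
/-- Every CP function on the free monoid over an alphabet with at least two letters
has a multidegree: length of the value is an affine function of the lengths of the
arguments. -/
theorem cp_multidegree {α : Type*} (a b : α) (hab : a ≠ b) {n : ℕ}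
    (f : (Fin n → FreeMonoid α) → FreeMonoid α) (hf : IsCP f) :
    ∃ k : Fin n → ℕ, ∀ u : Fin n → FreeMonoid α,
      (f u).length = (f (fun _ => 1)).length + ∑ i, k i * (u i).length := by
  classical
  set Φ : (Fin n → ℕ) → ℕ := fun ℓ => (f fun i => ofList (List.replicate (ℓ i) a)).length
  have hΦ (u : Fin n → FreeMonoid α) : (f u).length = Φ fun i => (u i).length :=
    hf.length_eq_length fun i => by simp [length]
  have hadd (ℓ m : Fin n → ℕ) : Φ (ℓ + m) + Φ 0 = Φ ℓ + Φ m := by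
    have := hf.length_mul_add_length_one (· = b) (u := fun i => ofList (List.replicate (ℓ i) a))
      (v := fun i => ofList (List.replicate (m i) b)) (by simp [hab]) (by simp)
    simp only [hΦ] at this
    convert this using 3 <;> funext i <;> simp [length]
  obtain ⟨k, hk⟩ := exists_eq_apply_zero_add_sum_mul hadd
  exact ⟨k, fun u => by rw [hΦ u, hΦ, hk]; rfl⟩
end

section
/- Let a, b be distinct letters of α, let n > 1, let τ = a^n · b · a · b^n, and let v be a word with |v| < |τ|. Let w be a nonempty word with |w| ≥ |τ| such that τ is not a factor of w and such that τ and w do not overlap, i.e. there do not exist words u, t', t with t nonempty and t ≠ τ such that either (w = u·t and τ = t·t') or (τ = t'·t and w = t·u). Then for every word s having w as a factor and every τ-irreducible word s' with s' ~_{τ,v} s, w is a factor of s'. -/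
def IsFactor {α : Type*} (w t : FreeMonoid α) : Prop := ∃ u u' : FreeMonoid α, t = u * w * u'

/-!
Rewrite occurrences of `τ` to `v`. Since `τ = aⁿbabⁿ` is unbordered, two occurrences of `τ` in a
word coincide or are disjoint, so the two results of rewriting one word are equal or meet after
one more step each. Hence `~_{τ,v}` is joinability under rewriting, and a `τ`-irreducible `s'`
congruent to `s` is reached from `s` by rewriting. An occurrence of `τ` is disjoint from any
occurrence of `w` in the same word: `w` does not contain `τ`, is not shorter than `τ`, and does
not overlap it. So rewriting never destroys the factor `w` of `s`.
-/

namespace FreeMonoid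

variable {α : Type*}

theorem mul_eq_mul_iff {a b c d : FreeMonoid α} :
    a * b = c * d ↔ (∃ e, c = a * e ∧ b = e * d) ∨ ∃ e, a = c * e ∧ d = e * b :=
  List.append_eq_append_iff

theorem eq_one_and_eq_one_of_eq_mul_mul {x y p q : FreeMonoid α} (h : y = p * x * q)
    (hlen : y.length ≤ x.length) : p = 1 ∧ q = 1 := by
  have := congrArg length h
  simp only [length_mul] at this
  exact ⟨length_eq_zero.mp (by omega), length_eq_zero.mp (by omega)⟩

theorem toList_of_pow (x : α) (n : ℕ) : (of x ^ n).toList = List.replicate n x := by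
  induction n with
  | zero => rfl
  | succ k ih => rw [pow_succ, toList_mul, ih, toList_of, List.replicate_succ']

end FreeMonoid

section

open FreeMonoid Relation

variable {α : Type*}

/-- `¬ Overlaps τ τ` says that `τ` is unbordered. -/
def Overlaps (w τ : FreeMonoid α) : Prop :=
  ∃ u t' t : FreeMonoid α, t ≠ 1 ∧ t ≠ τ ∧ ((w = u * t ∧ τ = t * t') ∨ (τ = t' * t ∧ w = t * u))

theorem overlaps_self_iff {τ : FreeMonoid α} :
    Overlaps τ τ ↔ ∃ u t u', t ≠ 1 ∧ t ≠ τ ∧ τ = u * t ∧ τ = t * u' := by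
  constructor
  · rintro ⟨u, t', t, h1, hτ, ⟨hu, ht'⟩ | ⟨ht', hu⟩⟩
    · exact ⟨u, t, t', h1, hτ, hu, ht'⟩
    · exact ⟨t', t, u, h1, hτ, ht', hu⟩
  · rintro ⟨u, t, u', h1, hτ, hu, hu'⟩
    exact ⟨u, u', t, h1, hτ, Or.inl ⟨hu, hu'⟩⟩

/-- An occurrence of `y` after the prefix `k` of a word beginning with `x` starts after `x`, lies
inside `x`, or straddles the end of `x`. -/
theorem mul_eq_mul_mul_trichotomy {x y k r₁ r₂ : FreeMonoid α} (h : x * r₁ = k * (y * r₂)) :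
    (∃ m, k = x * m ∧ r₁ = m * y * r₂) ∨ (∃ q, x = k * y * q ∧ r₂ = q * r₁) ∨
      ∃ e f, e ≠ 1 ∧ e ≠ y ∧ x = k * e ∧ y = e * f := by
  rcases mul_eq_mul_iff.mp h with ⟨m, hk, hr⟩ | ⟨e, hx, hyr⟩
  · exact Or.inl ⟨m, hk, by rw [hr, mul_assoc]⟩
  rcases mul_eq_mul_iff.mp hyr with ⟨q, he, hr⟩ | ⟨f, hy, hr⟩
  · exact Or.inr (Or.inl ⟨q, by rw [hx, he, mul_assoc], hr⟩)
  by_cases he1 : e = 1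
  · subst he1
    exact Or.inl ⟨1, by simpa using hx.symm, by simp [hr, hy]⟩
  by_cases hey : e = y
  · subst hey
    obtain rfl : f = 1 := by simpa using hy.symm
    exact Or.inr (Or.inl ⟨1, by simpa using hx, by simpa using hr.symm⟩)
  exact Or.inr (Or.inr ⟨e, f, he1, hey, hx, hy⟩)

theorem eq_or_disjoint_of_not_overlaps_self {τ k r₁ r₂ : FreeMonoid α} (hτ : ¬ Overlaps τ τ)
    (h : τ * r₁ = k * (τ * r₂)) : (k = 1 ∧ r₁ = r₂) ∨ ∃ m, k = τ * m ∧ r₁ = m * τ * r₂ := by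
  rcases mul_eq_mul_mul_trichotomy h with hdisj | ⟨q, hq, hr⟩ | ⟨e, f, he1, heτ, hk, he⟩
  · exact Or.inr hdisj
  · obtain ⟨rfl, rfl⟩ := eq_one_and_eq_one_of_eq_mul_mul hq le_rfl
    exact Or.inl ⟨rfl, by simpa using hr.symm⟩
  · exact absurd ⟨k, f, e, he1, heτ, Or.inl ⟨hk, he⟩⟩ hτ

theorem disjoint_right_of_not_overlaps {w τ k r₁ r₂ : FreeMonoid α} (hw : ¬ IsFactor τ w)
    (hov : ¬ Overlaps w τ) (h : w * r₁ = k * (τ * r₂)) : ∃ m, k = w * m ∧ r₁ = m * τ * r₂ := by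
  rcases mul_eq_mul_mul_trichotomy h with hdisj | ⟨q, hq, -⟩ | ⟨e, f, he1, heτ, hk, he⟩
  · exact hdisj
  · exact absurd ⟨k, q, hq⟩ hw
  · exact absurd ⟨k, f, e, he1, heτ, Or.inl ⟨hk, he⟩⟩ hov

theorem disjoint_left_of_not_overlaps {w τ k r₁ r₂ : FreeMonoid α}
    (hlen : τ.length ≤ w.length) (hw : ¬ IsFactor τ w) (hov : ¬ Overlaps w τ)
    (h : τ * r₁ = k * (w * r₂)) : ∃ m, k = τ * m ∧ r₁ = m * w * r₂ := by
  rcases mul_eq_mul_mul_trichotomy h with hdisj | ⟨q, hq, -⟩ | ⟨e, f, he1, hew, hk, he⟩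
  · exact hdisj
  · obtain ⟨rfl, rfl⟩ := eq_one_and_eq_one_of_eq_mul_mul hq hlen
    exact absurd ⟨1, 1, by simpa using hq.symm⟩ hw
  · by_cases heτ : e = τ
    · exact absurd ⟨1, f, by rw [he, heτ, one_mul]⟩ hw
    · exact absurd ⟨f, k, e, he1, heτ, Or.inr ⟨hk, he⟩⟩ hov

def RewriteStep (τ v x y : FreeMonoid α) : Prop :=
  ∃ u u', x = u * τ * u' ∧ y = u * v * u'

section RewriteStep

variable {τ v x y : FreeMonoid α}

theorem RewriteStep.isFactor (h : RewriteStep τ v x y) : IsFactor τ x :=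
  let ⟨u, u', hx, _⟩ := h
  ⟨u, u', hx⟩

theorem RewriteStep.mul_mul (h : RewriteStep τ v x y) (p q : FreeMonoid α) :
    RewriteStep τ v (p * x * q) (p * y * q) :=
  let ⟨u, u', hx, hy⟩ := h
  ⟨p * u, u' * q, by simp [hx, mul_assoc], by simp [hy, mul_assoc]⟩

theorem reflTransGen_rewriteStep_mul {x' y' : FreeMonoid α}
    (hx : ReflTransGen (RewriteStep τ v) x x') (hy : ReflTransGen (RewriteStep τ v) y y') :
    ReflTransGen (RewriteStep τ v) (x * y) (x' * y') := by
  have hl := hx.lift (· * y) fun a b h => by simpa using h.mul_mul 1 y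
  have hr := hy.lift (x' * ·) fun a b h => by simpa using h.mul_mul x' 1
  exact hl.trans hr

theorem eq_of_reflTransGen_of_not_isFactor (hx : ¬ IsFactor τ x)
    (h : ReflTransGen (RewriteStep τ v) x y) : y = x := by
  rcases h.cases_head with rfl | ⟨c, hc, -⟩
  · rfl
  · exact absurd hc.isFactor hx

theorem RewriteStep.isFactor_of_isFactor {w : FreeMonoid α} (hlen : τ.length ≤ w.length)
    (hw : ¬ IsFactor τ w) (hov : ¬ Overlaps w τ) (h : RewriteStep τ v x y) (hwx : IsFactor w x) :
    IsFactor w y := by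
  obtain ⟨u, u', hx, rfl⟩ := h
  obtain ⟨l, r, hl⟩ := hwx
  have : l * (w * r) = u * (τ * u') := by rw [← mul_assoc, ← hl, hx, mul_assoc]
  rcases mul_eq_mul_iff.mp this with ⟨k, rfl, hk⟩ | ⟨k, rfl, hk⟩
  · obtain ⟨m, rfl, -⟩ := disjoint_right_of_not_overlaps hw hov hk
    exact ⟨l, m * v * u', by simp [mul_assoc]⟩
  · obtain ⟨m, rfl, rfl⟩ := disjoint_left_of_not_overlaps hlen hw hov hk
    exact ⟨u * v * m, r, by simp [mul_assoc]⟩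

theorem isFactor_of_reflTransGen_rewriteStep {w : FreeMonoid α} (hlen : τ.length ≤ w.length)
    (hw : ¬ IsFactor τ w) (hov : ¬ Overlaps w τ) (h : ReflTransGen (RewriteStep τ v) x y)
    (hwx : IsFactor w x) : IsFactor w y := by
  induction h with
  | refl => exact hwx
  | tail _ hstep ih => exact hstep.isFactor_of_isFactor hlen hw hov ih

theorem RewriteStep.diamond_of_eq_mul {k r₁ r₂ : FreeMonoid α} (hτ : ¬ Overlaps τ τ)
    (h : τ * r₁ = k * (τ * r₂)) (l : FreeMonoid α) :
    ∃ d, ReflGen (RewriteStep τ v) (l * v * r₁) d ∧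
      ReflGen (RewriteStep τ v) (l * k * v * r₂) d := by
  rcases eq_or_disjoint_of_not_overlaps_self hτ h with ⟨rfl, rfl⟩ | ⟨m, rfl, rfl⟩
  · exact ⟨_, .refl, by rw [mul_one]⟩
  · exact ⟨l * v * m * v * r₂, .single ⟨l * v * m, r₂, by simp [mul_assoc], rfl⟩,
      .single ⟨l, m * v * r₂, by simp [mul_assoc], by simp [mul_assoc]⟩⟩

theorem RewriteStep.diamond {z : FreeMonoid α} (hτ : ¬ Overlaps τ τ)
    (hy : RewriteStep τ v x y) (hz : RewriteStep τ v x z) :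
    ∃ d, ReflGen (RewriteStep τ v) y d ∧ ReflGen (RewriteStep τ v) z d := by
  obtain ⟨l₁, r₁, rfl, rfl⟩ := hy
  obtain ⟨l₂, r₂, hx, rfl⟩ := hz
  simp only [mul_assoc] at hx
  rcases mul_eq_mul_iff.mp hx with ⟨k, rfl, hk⟩ | ⟨k, rfl, hk⟩
  · exact diamond_of_eq_mul hτ hk l₁
  · obtain ⟨d, hd₁, hd₂⟩ := diamond_of_eq_mul hτ hk l₂
    exact ⟨d, hd₂, hd₁⟩

end RewriteStep

theorem join_reflTransGen_rewriteStep_of_conGen {τ v x y : FreeMonoid α} (hτ : ¬ Overlaps τ τ)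
    (h : conGen (fun p q => p = τ ∧ q = v) x y) : Join (ReflTransGen (RewriteStep τ v)) x y := by
  let joinCon : Con (FreeMonoid α) :=
    { r := Join (ReflTransGen (RewriteStep τ v))
      iseqv := equivalence_join_reflTransGen fun _ _ _ hy hz =>
        (hy.diamond hτ hz).imp fun _ hd => ⟨hd.1, hd.2.to_reflTransGen⟩
      mul' := by
        rintro _ _ _ _ ⟨c, h₁, h₂⟩ ⟨d, h₃, h₄⟩
        exact ⟨c * d, reflTransGen_rewriteStep_mul h₁ h₃, reflTransGen_rewriteStep_mul h₂ h₄⟩ }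
  suffices conGen (fun p q => p = τ ∧ q = v) ≤ joinCon from Con.le_def.mp this h
  refine Con.conGen_le.mpr ?_
  rintro _ _ ⟨rfl, rfl⟩
  exact ⟨_, .single ⟨1, 1, by simp, by simp⟩, .refl⟩

theorem List.getElem_eq_getElem_add_of_border {l u t t' : List α} (h₁ : l = u ++ t)
    (h₂ : l = t ++ t') {i : ℕ} (hi : i < t.length) :
    l[i]'(by simp [h₂]; omega) = l[u.length + i]'(by simp [h₁]; omega) := by
  subst h₁
  rw [List.getElem_of_eq h₂, List.getElem_append_left hi, List.getElem_append_right (by omega)]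
  simp

theorem List.getElem_replicate_append_cons_cons_replicate (a b : α) (n i : ℕ)
    (hi : i < 2 * n + 2) :
    (List.replicate n a ++ b :: a :: List.replicate n b)[i]'(by simp; omega) =
      if i < n ∨ i = n + 1 then a else b := by
  simp only [List.getElem_append, List.getElem_cons, List.getElem_replicate, List.length_replicate]
  split_ifs <;> first | rfl | omega

theorem not_overlaps_self_pow_mul_mul_mul_pow {a b : α} (hab : a ≠ b) {n : ℕ} (hn : 1 < n) :
    ¬ Overlaps (of a ^ n * of b * of a * of b ^ n) (of a ^ n * of b * of a * of b ^ n) := by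
  set τ := of a ^ n * of b * of a * of b ^ n
  have hτ : τ.toList = List.replicate n a ++ b :: a :: List.replicate n b := by
    simp [τ, toList_of_pow]
  rw [overlaps_self_iff]
  rintro ⟨u, t, u', ht, htτ, hu, hu'⟩
  have hl : τ.toList = u.toList ++ t.toList := by rw [hu, toList_mul]
  have hl' : τ.toList = t.toList ++ u'.toList := by rw [hu', toList_mul]
  have hlen : u.toList.length + t.toList.length = 2 * n + 2 := by
    have := congrArg List.length hl
    simp only [hτ, List.length_append, List.length_replicate, List.length_cons] at this
    omega
  have hu1 : u.toList.length ≠ 0 := fun h => htτ (by simp [hu, length_eq_zero.mp h])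
  have ht1 : t.toList.length ≠ 0 := ht ∘ length_eq_zero.mp
  -- the border `t` makes `|u|` a period of `τ`; exhibit a position where that fails
  obtain ⟨i, hi, ha, hb⟩ : ∃ i, i < t.toList.length ∧ (i < n ∨ i = n + 1) ∧
      ¬ (u.toList.length + i < n ∨ u.toList.length + i = n + 1) :=
    ⟨if u.toList.length ≤ n then n - u.toList.length
      else if u.toList.length = n + 1 then 1 else 2 * n + 1 - u.toList.length,
      by split_ifs <;> omega⟩
  have := List.getElem_eq_getElem_add_of_border hl hl' hi
  simp only [hτ] at this
  rw [List.getElem_replicate_append_cons_cons_replicate a b n i (by omega),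
    List.getElem_replicate_append_cons_cons_replicate a b n _ (by omega), if_pos ha,
    if_neg hb] at this
  exact hab this

end

theorem word_strongly_irreducible_general {α : Type*} (a b : α) (hab : a ≠ b)
    (n : ℕ) (hn : 1 < n)
    (τ : FreeMonoid α)
    (hτ : τ = (FreeMonoid.of a) ^ n * FreeMonoid.of b * FreeMonoid.of a * (FreeMonoid.of b) ^ n)
    (v : FreeMonoid α)
    (w : FreeMonoid α) (hwlen : τ.length ≤ w.length)
    (hwirr : ¬ IsFactor τ w)
    (hoverlap : ¬ ∃ u t' t : FreeMonoid α, t ≠ 1 ∧ t ≠ τ ∧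
      ((w = u * t ∧ τ = t * t') ∨ (τ = t' * t ∧ w = t * u)))
    (s : FreeMonoid α) (hws : IsFactor w s)
    (s' : FreeMonoid α) (hs'irr : ¬ IsFactor τ s')
    (hss' : (conGen (fun x y => x = τ ∧ y = v)) s' s) :
    IsFactor w s' := by
  have hunbordered : ¬ Overlaps τ τ := hτ ▸ not_overlaps_self_pow_mul_mul_mul_pow hab hn
  obtain ⟨d, hs'd, hsd⟩ := join_reflTransGen_rewriteStep_of_conGen hunbordered hss'
  rw [eq_of_reflTransGen_of_not_isFactor hs'irr hs'd] at hsd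
  exact isFactor_of_reflTransGen_rewriteStep hwlen hwirr hoverlap hsd hws

/-- For `τ = aⁿbabⁿ` and `|v| < |τ|`: a nonempty τ-irreducible word `w` of length
at least `|τ|` which does not overlap with `τ` is strongly τ-irreducible: it remains
a factor of any τ-irreducible word congruent to a word containing it. -/
theorem word_strongly_irreducible {α : Type*} (a b : α) (hab : a ≠ b)
    (n : ℕ) (hn : 1 < n)
    (τ : FreeMonoid α)
    (hτ : τ = (FreeMonoid.of a) ^ n * FreeMonoid.of b * FreeMonoid.of a * (FreeMonoid.of b) ^ n)
    (v : FreeMonoid α) (hv : v.length < τ.length)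
    (w : FreeMonoid α) (hwne : w ≠ 1) (hwlen : τ.length ≤ w.length)
    (hwirr : ¬ IsFactor τ w)
    (hoverlap : ¬ ∃ u t' t : FreeMonoid α, t ≠ 1 ∧ t ≠ τ ∧
      ((w = u * t ∧ τ = t * t') ∨ (τ = t' * t ∧ w = t * u)))
    (s : FreeMonoid α) (hws : IsFactor w s)
    (s' : FreeMonoid α) (hs'irr : ¬ IsFactor τ s')
    (hss' : (conGen (fun x y => x = τ ∧ y = v)) s' s) :
    IsFactor w s' :=
  word_strongly_irreducible_general a b hab n hn τ hτ v w hwlen hwirr hoverlap s hws s' hs'irr hss'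
end
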